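/- arXiv:1512.06724 — 5 statements merged into one kernel-verified Lean document; each statement's English description precedes it below -/
import Mathlib

section
/- Let n ≥ 3, let f₁,...,fₙ : ℝⁿ → ℝ be smooth with 3fᵢ(x) + fⱼ(x) ≠ 0 for all x and all i ≠ j, and let φ : ℝⁿ → ℝ be a smooth positive solution of the system φ_{,xᵢxᵢ}/φ − |∇φ|²/(2φ²) = φ² fᵢ for every i, and φ_{,xᵢxⱼ} = 0 for all i ≠ j. Then for all i ≠ j one has φ_{,xⱼ}/φ = − f_{i,xⱼ}/(3fᵢ + fⱼ). -/
noncomputable def pd {n : ℕ} (φ : (Fin n → ℝ) → ℝ) (i : Fin n) (x : Fin n → ℝ) : ℝ :=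
  fderiv ℝ φ x (Pi.single i 1)

section helper

variable {n : ℕ} {f g : (Fin n → ℝ) → ℝ} {j : Fin n} {x : Fin n → ℝ}

lemma pd_smooth {φ : (Fin n → ℝ) → ℝ} (h : ContDiff ℝ (⊤ : ℕ∞) φ) (i : Fin n) :
    ContDiff ℝ (⊤ : ℕ∞) (pd φ i) := by
  unfold pd
  exact (h.fderiv_right (by simp)).clm_apply contDiff_const

lemma pd_const (c : ℝ) : pd (fun _ : Fin n → ℝ => c) j x = 0 := by
  unfold pd; simp

lemma pd_sub (hfd : DifferentiableAt ℝ f x) (hgd : DifferentiableAt ℝ g x) :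
    pd (fun y => f y - g y) j x = pd f j x - pd g j x := by
  unfold pd; rw [fderiv_fun_sub hfd hgd]; simp

lemma pd_mul (hfd : DifferentiableAt ℝ f x) (hgd : DifferentiableAt ℝ g x) :
    pd (fun y => f y * g y) j x = f x * pd g j x + g x * pd f j x := by
  unfold pd; rw [fderiv_fun_mul hfd hgd]; simp

lemma pd_const_mul (hfd : DifferentiableAt ℝ f x) (a : ℝ) :
    pd (fun y => a * f y) j x = a * pd f j x := by
  unfold pd; rw [fderiv_const_mul hfd]; simp

lemma pd_sq (hfd : DifferentiableAt ℝ f x) :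
    pd (fun y => f y ^ 2) j x = 2 * f x * pd f j x := by
  have h2 : (fun y => f y ^ 2) = fun y => f y * f y := by ext y; ring
  rw [h2, pd_mul hfd hfd]; ring

lemma pd_pow4 (hfd : DifferentiableAt ℝ f x) :
    pd (fun y => f y ^ 4) j x = 4 * f x ^ 3 * pd f j x := by
  have h2 : (fun y => f y ^ 4) = fun y => (f y * f y) * (f y * f y) := by ext y; ring
  rw [h2, pd_mul (f := fun y => f y * f y) (g := fun y => f y * f y) (hfd.mul hfd) (hfd.mul hfd), pd_mul hfd hfd]; ring

lemma pd_sum {F : Fin n → (Fin n → ℝ) → ℝ}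
    (hFd : ∀ k, DifferentiableAt ℝ (F k) x) :
    pd (fun y => ∑ k, F k y) j x = ∑ k, pd (F k) j x := by
  unfold pd
  rw [fderiv_fun_sum (fun k _ => hFd k)]
  simp

lemma pd_comm {φ : (Fin n → ℝ) → ℝ} (h : ContDiff ℝ (⊤ : ℕ∞) φ) (i j : Fin n) (x : Fin n → ℝ) :
    pd (pd φ i) j x = pd (pd φ j) i x := by
  have hd : ∀ y, HasFDerivAt φ (fderiv ℝ φ y) y :=
    fun y => ((h.differentiable (by simp)) y).hasFDerivAt
  have h1 : Differentiable ℝ (fderiv ℝ φ) := (h.fderiv_right (m := (⊤ : ℕ∞)) (by simp)).differentiable (by simp)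
  have h2 : HasFDerivAt (fderiv ℝ φ) (fderiv ℝ (fderiv ℝ φ) x) x := (h1 x).hasFDerivAt
  have hsym := second_derivative_symmetric hd h2
  have key : ∀ v w : Fin n → ℝ, fderiv ℝ (fun y => fderiv ℝ φ y v) x w
      = fderiv ℝ (fderiv ℝ φ) x w v := by
    intro v w
    rw [fderiv_clm_apply (h1 x) (differentiableAt_const v)]
    simp
  unfold pd
  rw [key, key, hsym]

end helper

theorem stmt1 (n : ℕ) (hn : 3 ≤ n)
    (f : Fin n → (Fin n → ℝ) → ℝ)
    (hf : ∀ i, ContDiff ℝ (⊤ : ℕ∞) (f i))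
    (hne : ∀ i j : Fin n, i ≠ j → ∀ x, 3 * f i x + f j x ≠ 0)
    (φ : (Fin n → ℝ) → ℝ) (hφs : ContDiff ℝ (⊤ : ℕ∞) φ) (hφpos : ∀ x, 0 < φ x)
    (heq : ∀ i : Fin n, ∀ x, pd (pd φ i) i x / φ x
      - (∑ k, (pd φ k x) ^ 2) / (2 * φ x ^ 2) = φ x ^ 2 * f i x)
    (hmix : ∀ i j : Fin n, i ≠ j → ∀ x, pd (pd φ j) i x = 0) :
    ∀ i j : Fin n, i ≠ j → ∀ x,
      pd φ j x / φ x = - pd (f i) j x / (3 * f i x + f j x) := by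
  intro i j hij x
  have hφd : Differentiable ℝ φ := hφs.differentiable (by simp)
  have hpdk : ∀ k, ContDiff ℝ (⊤ : ℕ∞) (pd φ k) := pd_smooth hφs
  have hpdkd : ∀ k, Differentiable ℝ (pd φ k) := fun k => (hpdk k).differentiable (by simp)
  have hAs : ContDiff ℝ (⊤ : ℕ∞) (pd (pd φ i) i) := pd_smooth (hpdk i) i
  have hAd : Differentiable ℝ (pd (pd φ i) i) := hAs.differentiable (by simp)
  have hfd : Differentiable ℝ (f i) := (hf i).differentiable (by simp)
  have hc : ∀ y, φ y ≠ 0 := fun y => (hφpos y).ne'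
  -- cleared form of the equations
  have hgh : (fun y => 2 * φ y * pd (pd φ i) i y - ∑ k, (pd φ k y) ^ 2)
      = fun y => 2 * φ y ^ 4 * f i y := by
    funext y
    have e := heq i y
    have hcy := hc y
    field_simp at e
    have h' : φ y * (2 * φ y * pd (pd φ i) i y - ∑ k, (pd φ k y) ^ 2)
        = φ y * (2 * φ y ^ 4 * f i y) := by linear_combination φ y * e
    exact mul_left_cancel₀ hcy h'
  -- third derivative vanishes
  have h3 : pd (pd (pd φ i) i) j x = 0 := by
    have hz : (pd (pd φ i) j) = fun _ => (0 : ℝ) := funext (hmix j i (Ne.symm hij))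
    rw [pd_comm (hpdk i) i j x, hz, pd_const]
  -- mixed second derivatives in direction j
  have hmixj : ∀ k, k ≠ j → pd (pd φ k) j x = 0 := fun k hk => hmix j k (Ne.symm hk) x
  -- differentiate the cleared equation in direction j
  have e3 : pd (fun y => 2 * φ y * pd (pd φ i) i y - ∑ k, (pd φ k y) ^ 2) j x
      = pd (fun y => 2 * φ y ^ 4 * f i y) j x := by rw [hgh]
  -- compute left side
  have eL : pd (fun y => 2 * φ y * pd (pd φ i) i y - ∑ k, (pd φ k y) ^ 2) j x
      = 2 * pd φ j x * pd (pd φ i) i x - 2 * pd φ j x * pd (pd φ j) j x := by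
    have d1 : DifferentiableAt ℝ (fun y => 2 * φ y * pd (pd φ i) i y) x := by
      exact ((hφd x).const_mul 2).mul (hAd x)
    have d2 : DifferentiableAt ℝ (fun y => ∑ k, (pd φ k y) ^ 2) x := by
      apply DifferentiableAt.fun_sum
      intro k _
      exact (hpdkd k x).pow 2
    rw [pd_sub d1 d2]
    have e1 : pd (fun y => 2 * φ y * pd (pd φ i) i y) j x
        = 2 * φ x * pd (pd (pd φ i) i) j x + pd (pd φ i) i x * (2 * pd φ j x) := by
      have := pd_mul (f := fun y => 2 * φ y) (g := pd (pd φ i) i)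
        ((hφd x).const_mul 2) (hAd x) (j := j)
      rw [this, pd_const_mul (hφd x) 2]
    have e2 : pd (fun y => ∑ k, (pd φ k y) ^ 2) j x
        = 2 * pd φ j x * pd (pd φ j) j x := by
      rw [pd_sum (F := fun k y => (pd φ k y) ^ 2) (fun k => (hpdkd k x).pow 2)]
      rw [Finset.sum_eq_single j]
      · exact pd_sq (hpdkd j x)
      · intro k _ hk
        rw [pd_sq (hpdkd k x), hmixj k hk]; ring
      · intro h; exact absurd (Finset.mem_univ j) h
    rw [e1, e2, h3]
    ring
  -- compute right side
  have eR : pd (fun y => 2 * φ y ^ 4 * f i y) j x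
      = 2 * (φ x ^ 4 * pd (f i) j x + f i x * (4 * φ x ^ 3 * pd φ j x)) := by
    have d1 : DifferentiableAt ℝ (fun y => φ y ^ 4) x := (hφd x).pow 4
    have : (fun y => 2 * φ y ^ 4 * f i y) = fun y => 2 * (φ y ^ 4 * f i y) := by
      funext y; ring
    rw [this, pd_const_mul (f := fun y => φ y ^ 4 * f i y) (d1.mul (hfd x)) 2, pd_mul d1 (hfd x), pd_pow4 (hφd x)]
  -- final algebra
  have e1 := heq i x
  have e2 := heq j x
  have hcx := hc x
  have hnex := hne i j hij x
  rw [div_eq_div_iff hcx hnex]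
  set c := φ x
  set P := pd φ j x
  set A := pd (pd φ i) i x
  set Q := pd (pd φ j) j x
  set S := ∑ k, (pd φ k x) ^ 2
  set F := f i x
  set G := f j x
  set FJ := pd (f i) j x
  rw [eL, eR] at e3
  have e1' : 2 * A * c - S = 2 * c ^ 4 * F := by
    field_simp at e1
    have h' : c * (2 * A * c - S) = c * (2 * c ^ 4 * F) := by linear_combination c * e1
    exact mul_left_cancel₀ hcx h'
  have e2' : 2 * Q * c - S = 2 * c ^ 4 * G := by
    field_simp at e2
    have h' : c * (2 * Q * c - S) = c * (2 * c ^ 4 * G) := by linear_combination c * e2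
    exact mul_left_cancel₀ hcx h'
  have h4 : (c : ℝ) ^ 4 ≠ 0 := pow_ne_zero _ hcx
  have key : c ^ 4 * (P * (3 * F + G)) = c ^ 4 * (-FJ * c) := by
    linear_combination (P / 2) * e1' - (P / 2) * e2' - (c / 2) * e3
  exact mul_left_cancel₀ h4 key
end

section
/- Let n ≥ 3, let a, b₁,...,bₙ, c ∈ ℝ with λ := Σᵢ bᵢ² − 4ac < 0. Then φ(x) = Σᵢ (a xᵢ² + bᵢ xᵢ) + c never vanishes on ℝⁿ, and (after replacing φ by −φ if necessary so that φ > 0) φ satisfies, with f := −λ/(2φ⁴), the system φ_{,xᵢxᵢ}/φ − |∇φ|²/(2φ²) = φ² f for every i and φ_{,xᵢxⱼ} = 0 for i ≠ j. -/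
/-!
Completing the square gives `4 a φ = ∑ₖ (2 a xₖ + bₖ)² - λ = |∇φ|² - λ`, so `a φ > 0` when `λ < 0`,
and `φ` can be normalised to be positive by multiplying it by the sign of `a`, which rescales the
coefficients without changing `λ`. Since the Hessian of `φ` is `2 a I`, the equation for `φ` then
reduces to the same identity `|∇φ|² = 4 a φ + λ`.
-/

section Quadratic

variable {n : ℕ}

def quadratic (a c : ℝ) (b : Fin n → ℝ) (x : Fin n → ℝ) : ℝ :=
  (∑ i, (a * x i ^ 2 + b i * x i)) + c

theorem four_mul_quadratic (a c : ℝ) (b x : Fin n → ℝ) :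
    4 * a * quadratic a c b x
      = ∑ k, (2 * a * x k + b k) ^ 2 - ((∑ k, b k ^ 2) - 4 * a * c) := by
  have hsq : ∑ k, (2 * a * x k + b k) ^ 2
      = ∑ k, 4 * a * (a * x k ^ 2 + b k * x k) + ∑ k, b k ^ 2 := by
    rw [← Finset.sum_add_distrib]
    exact Finset.sum_congr rfl fun k _ => by ring
  rw [hsq, quadratic, mul_add, Finset.mul_sum]
  ring

theorem quadratic_pos {a c : ℝ} {b : Fin n → ℝ} (ha : 0 < a)
    (hlam : (∑ i, b i ^ 2) - 4 * a * c < 0) (x : Fin n → ℝ) : 0 < quadratic a c b x := by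
  have h := four_mul_quadratic a c b x
  have hsq : 0 ≤ ∑ k, (2 * a * x k + b k) ^ 2 := Finset.sum_nonneg fun k _ => sq_nonneg _
  exact pos_of_mul_pos_right (a := 4 * a) (by linarith) (by positivity)

theorem smul_quadratic (s a c : ℝ) (b x : Fin n → ℝ) :
    s * quadratic a c b x = quadratic (s * a) (s * c) (s • b) x := by
  simp only [quadratic, mul_add, Finset.mul_sum, Pi.smul_apply, smul_eq_mul]
  congr 1
  exact Finset.sum_congr rfl fun k _ => by ring

theorem hasFDerivAt_quadratic (a c : ℝ) (b x : Fin n → ℝ) :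
    HasFDerivAt (quadratic a c b)
      (∑ k, (2 * a * x k + b k) • (ContinuousLinearMap.proj k : (Fin n → ℝ) →L[ℝ] ℝ)) x := by
  have hcoord (k : Fin n) : HasFDerivAt (fun y : Fin n → ℝ => a * y k ^ 2 + b k * y k)
      ((2 * a * x k + b k) • (ContinuousLinearMap.proj k : (Fin n → ℝ) →L[ℝ] ℝ)) x := by
    have P : HasFDerivAt (fun y : Fin n → ℝ => y k)
        (ContinuousLinearMap.proj k : (Fin n → ℝ) →L[ℝ] ℝ) x := hasFDerivAt_apply k x
    refine (((P.pow 2).const_mul a).fun_add (P.const_mul (b k))).congr_fderiv ?_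
    ext v
    simp only [Nat.add_one_sub_one, pow_one, nsmul_eq_mul, Nat.cast_ofNat, add_apply, smul_apply,
      ContinuousLinearMap.proj_apply, smul_eq_mul]
    ring
  exact (HasFDerivAt.fun_sum fun k _ => hcoord k).add_const c

theorem pd_quadratic (a c : ℝ) (b : Fin n → ℝ) (i : Fin n) :
    pd (quadratic a c b) i = fun x => 2 * a * x i + b i := by
  funext x
  simp [pd, (hasFDerivAt_quadratic a c b x).fderiv, Pi.single_apply]

theorem pd_affine (r d : ℝ) (i j : Fin n) (x : Fin n → ℝ) :
    pd (fun y => r * y j + d) i x = if j = i then r else 0 := by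
  simp [pd, (((hasFDerivAt_apply (𝕜 := ℝ) j x).const_mul r).add_const d).fderiv, Pi.single_apply]

theorem pd_pd_quadratic (a c : ℝ) (b : Fin n → ℝ) (i j : Fin n) (x : Fin n → ℝ) :
    pd (pd (quadratic a c b) j) i x = if j = i then 2 * a else 0 := by
  rw [pd_quadratic]
  exact pd_affine _ _ i j x

theorem quadratic_pd_equation (a c : ℝ) (b : Fin n → ℝ) (i : Fin n) {x : Fin n → ℝ}
    (hx : quadratic a c b x ≠ 0) :
    pd (pd (quadratic a c b) i) i x / quadratic a c b x
        - (∑ k, pd (quadratic a c b) k x ^ 2) / (2 * quadratic a c b x ^ 2)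
      = quadratic a c b x ^ 2
        * (-((∑ k, b k ^ 2) - 4 * a * c) / (2 * quadratic a c b x ^ 4)) := by
  have hgrad : ∑ k, pd (quadratic a c b) k x ^ 2
      = 4 * a * quadratic a c b x + ((∑ k, b k ^ 2) - 4 * a * c) := by
    simp only [four_mul_quadratic, pd_quadratic]
    ring
  rw [pd_pd_quadratic, if_pos rfl, hgrad]
  field_simp
  ring

end Quadratic

theorem stmt9_general (n : ℕ) (a c : ℝ) (b : Fin n → ℝ)
    (hlam : (∑ i, b i ^ 2) - 4 * a * c < 0)
    (φ : (Fin n → ℝ) → ℝ)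
    (hφ : ∀ x, φ x = (∑ i, (a * x i ^ 2 + b i * x i)) + c) :
    (∀ x, φ x ≠ 0) ∧
    ∃ s : ℝ, (s = 1 ∨ s = -1) ∧ (∀ x, 0 < s * φ x) ∧
      (∀ i : Fin n, ∀ x,
        pd (pd (fun y => s * φ y) i) i x / (s * φ x)
          - (∑ k, (pd (fun y => s * φ y) k x) ^ 2) / (2 * (s * φ x) ^ 2)
          = (s * φ x) ^ 2 *
            (-((∑ i, b i ^ 2) - 4 * a * c) / (2 * (s * φ x) ^ 4))) ∧
      (∀ i j : Fin n, i ≠ j → ∀ x, pd (pd (fun y => s * φ y) j) i x = 0) := by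
  have ha : a ≠ 0 := by
    rintro rfl
    have : 0 ≤ ∑ i, b i ^ 2 := Finset.sum_nonneg fun i _ => sq_nonneg _
    linarith
  obtain ⟨s, hs, hsa⟩ : ∃ s : ℝ, (s = 1 ∨ s = -1) ∧ 0 < s * a := by
    rcases ha.lt_or_gt with h | h
    · exact ⟨-1, Or.inr rfl, by linarith⟩
    · exact ⟨1, Or.inl rfl, by linarith⟩
  have hs2 : s ^ 2 = 1 := by rcases hs with rfl | rfl <;> norm_num
  have hlam' : (∑ i, (s • b) i ^ 2) - 4 * (s * a) * (s * c) = (∑ i, b i ^ 2) - 4 * a * c := by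
    simp only [Pi.smul_apply, smul_eq_mul, mul_pow, ← Finset.mul_sum, hs2]
    linear_combination (-4 * a * c) * hs2
  have hψ (x) : s * φ x = quadratic (s * a) (s * c) (s • b) x := by
    rw [hφ, ← smul_quadratic, quadratic]
  have hpos (x) : 0 < s * φ x := hψ x ▸ quadratic_pos hsa (hlam'.symm ▸ hlam) x
  refine ⟨fun x h => by simpa [h] using hpos x, s, hs, hpos, fun i x => ?_, fun i j hij x => ?_⟩
  · simp only [hψ] at hpos ⊢
    rw [← hlam']
    exact quadratic_pd_equation _ _ _ i (hpos x).ne'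
  · simp only [hψ]
    rw [pd_pd_quadratic, if_neg hij.symm]

theorem stmt9 (n : ℕ) (hn : 3 ≤ n) (a c : ℝ) (b : Fin n → ℝ)
    (hlam : (∑ i, b i ^ 2) - 4 * a * c < 0)
    (φ : (Fin n → ℝ) → ℝ)
    (hφ : ∀ x, φ x = (∑ i, (a * x i ^ 2 + b i * x i)) + c) :
    (∀ x, φ x ≠ 0) ∧
    ∃ s : ℝ, (s = 1 ∨ s = -1) ∧ (∀ x, 0 < s * φ x) ∧
      (∀ i : Fin n, ∀ x,
        pd (pd (fun y => s * φ y) i) i x / (s * φ x)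
          - (∑ k, (pd (fun y => s * φ y) k x) ^ 2) / (2 * (s * φ x) ^ 2)
          = (s * φ x) ^ 2 *
            (-((∑ i, b i ^ 2) - 4 * a * c) / (2 * (s * φ x) ^ 4))) ∧
      (∀ i j : Fin n, i ≠ j → ∀ x, pd (pd (fun y => s * φ y) j) i x = 0) :=
  stmt9_general n a c b hlam φ hφ
end

section
/- Let n ≥ 3 and let f₁,...,fₙ be smooth functions with fᵢ depending only on the variable xᵢ, and 3fᵢ(xᵢ) + fⱼ(xⱼ) ≠ 0 for all xᵢ, xⱼ and all i ≠ j. Then there is no smooth positive function φ : ℝⁿ → ℝ satisfying φ_{,xᵢxᵢ}/φ − |∇φ|²/(2φ²) = φ² fᵢ for every i and φ_{,xᵢxⱼ} = 0 for all i ≠ j. -/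
lemma pd_def {n : ℕ} (g : (Fin n → ℝ) → ℝ) (k : Fin n) :
    pd g k = fun x => fderiv ℝ g x (Pi.single k 1) := rfl

lemma pd_contDiff {n : ℕ} {g : (Fin n → ℝ) → ℝ} (hg : ContDiff ℝ (⊤ : ℕ∞) g) (k : Fin n) :
    ContDiff ℝ (⊤ : ℕ∞) (pd g k) := by
  rw [pd_def]
  exact (hg.fderiv_right (by simp)).clm_apply contDiff_const

lemma hasDerivAt_line {n : ℕ} {g : (Fin n → ℝ) → ℝ} (hg : Differentiable ℝ g)
    (x v : Fin n → ℝ) (t : ℝ) :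
    HasDerivAt (fun s : ℝ => g (x + s • v)) (fderiv ℝ g (x + t • v) v) t := by
  have h1 : HasDerivAt (fun s : ℝ => x + s • v) v t := by
    simpa using ((hasDerivAt_id t).smul_const v).const_add x
  exact (hg (x + t • v)).hasFDerivAt.comp_hasDerivAt t h1

lemma pd_symm {n : ℕ} {g : (Fin n → ℝ) → ℝ} (hg : ContDiff ℝ (⊤ : ℕ∞) g) (a b : Fin n)
    (x : Fin n → ℝ) : pd (pd g a) b x = pd (pd g b) a x := by
  have hd : Differentiable ℝ (fderiv ℝ g) := (hg.fderiv_right (m := (⊤:ℕ∞)) (by simp)).differentiable (by decide)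
  have key : ∀ c d : Fin n, pd (pd g c) d x
      = fderiv ℝ (fderiv ℝ g) x (Pi.single d 1) (Pi.single c 1) := by
    intro c d
    have : pd (pd g c) d x
        = fderiv ℝ (fun y => fderiv ℝ g y (Pi.single c 1)) x (Pi.single d 1) := rfl
    rw [this, fderiv_clm_apply (hd x) (differentiableAt_const _)]
    simp
  rw [key a b, key b a]
  exact (hg.contDiffAt.isSymmSndFDerivAt (by simp only [minSmoothness_of_isRCLikeNormedField]; exact WithTop.coe_le_coe.mpr (le_top : (2:ℕ∞) ≤ ⊤))).eq _ _

lemma const_of_hasDerivAt_zero {h : ℝ → ℝ} (H : ∀ t, HasDerivAt h 0 t) (t : ℝ) : h t = h 0 :=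
  is_const_of_deriv_eq_zero (fun s => (H s).differentiableAt) (fun s => (H s).deriv) t 0

theorem stmt12 (n : ℕ) (hn : 3 ≤ n) (f : Fin n → ℝ → ℝ)
    (hf : ∀ i, ContDiff ℝ (⊤ : ℕ∞) (f i))
    (hne : ∀ i j : Fin n, i ≠ j → ∀ s t : ℝ, 3 * f i s + f j t ≠ 0) :
    ¬ ∃ φ : (Fin n → ℝ) → ℝ, ContDiff ℝ (⊤ : ℕ∞) φ ∧ (∀ x, 0 < φ x) ∧
      (∀ i : Fin n, ∀ x, pd (pd φ i) i x / φ x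
        - (∑ k, (pd φ k x) ^ 2) / (2 * φ x ^ 2) = φ x ^ 2 * f i (x i)) ∧
      (∀ i j : Fin n, i ≠ j → ∀ x, pd (pd φ j) i x = 0) := by
  rintro ⟨φ, hφtop, hpos, h3, h4⟩
  have hφ : ContDiff ℝ (⊤ : ℕ∞) φ := hφtop.of_le (by simp)
  have hφd : Differentiable ℝ φ := hφ.differentiable (by decide)
  have hsum : ∀ y : Fin n → ℝ, ∀ j : Fin n,
      ∑ k, (pd φ k y) ^ 2 = (pd φ j y) ^ 2 + ∑ k ∈ Finset.univ.erase j, (pd φ k y) ^ 2 :=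
    fun y j => (Finset.add_sum_erase _ _ (Finset.mem_univ j)).symm
  -- Step 1: all first partial derivatives vanish
  have key : ∀ (j : Fin n) (x : Fin n → ℝ), pd φ j x = 0 := by
    intro j x
    by_contra hP0
    have : Nontrivial (Fin n) := Fin.nontrivial_iff_two_le.mpr (by omega)
    obtain ⟨i, hij⟩ := exists_ne j
    set v : Fin n → ℝ := Pi.single j 1 with hv
    set L : ℝ → (Fin n → ℝ) := fun t => x + t • v with hLdef
    have hL0 : L 0 = x := by simp [hLdef]
    have hLk : ∀ (t : ℝ) (k : Fin n), k ≠ j → L t k = x k := by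
      intro t k hk
      simp [hLdef, hv, Pi.single_apply, hk]
    -- derivative facts along the line
    have hΦ : ∀ t, HasDerivAt (fun s => φ (L s)) (pd φ j (L t)) t :=
      fun t => hasDerivAt_line hφd x v t
    have hP : ∀ t, HasDerivAt (fun s => pd φ j (L s)) (pd (pd φ j) j (L t)) t :=
      fun t => hasDerivAt_line ((pd_contDiff hφ j).differentiable (by decide)) x v t
    -- partials in other directions are constant along the line
    have hPk : ∀ (k : Fin n), k ≠ j → ∀ t, pd φ k (L t) = pd φ k x := by
      intro k hk t
      have hD : ∀ s, HasDerivAt (fun u => pd φ k (L u)) 0 s := by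
        intro s
        have h := hasDerivAt_line ((pd_contDiff hφ k).differentiable (by decide)) x v s
        have hz : fderiv ℝ (pd φ k) (x + s • v) v = 0 := h4 j k (Ne.symm hk) (L s)
        rwa [hz] at h
      have := const_of_hasDerivAt_zero hD t
      rwa [hL0] at this
    -- the pure second partial in direction i is constant along the line
    have hA : ∀ t, pd (pd φ i) i (L t) = pd (pd φ i) i x := by
      have hzero : ∀ y, pd (pd (pd φ i) i) j y = 0 := by
        intro y
        have h1 : pd (pd (pd φ i) i) j y = pd (pd (pd φ i) j) i y :=
          pd_symm (pd_contDiff hφ i) i j y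
        have h2 : pd (pd φ i) j = fun _ => (0 : ℝ) := funext (h4 j i hij.symm)
        rw [h1, h2]
        simp [pd]
      intro t
      have hD : ∀ s, HasDerivAt (fun u => pd (pd φ i) i (L u)) 0 s := by
        intro s
        have h := hasDerivAt_line
          ((pd_contDiff (pd_contDiff hφ i) i).differentiable (by decide)) x v s
        have hz : fderiv ℝ (pd (pd φ i) i) (x + s • v) v = 0 := hzero (L s)
        rwa [hz] at h
      have := const_of_hasDerivAt_zero hD t
      rwa [hL0] at this
    set A := pd (pd φ i) i x with hAdef
    set B := ∑ k ∈ Finset.univ.erase j, (pd φ k x) ^ 2 with hBdef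
    have hBsum : ∀ t, ∑ k ∈ Finset.univ.erase j, (pd φ k (L t)) ^ 2 = B := by
      intro t
      rw [hBdef]
      exact Finset.sum_congr rfl fun k hk => by rw [hPk k (Finset.ne_of_mem_erase hk) t]
    -- the equation for index i along the line, cleared of denominators
    have eqi : ∀ t, 2 * A * φ (L t) - (B + (pd φ j (L t)) ^ 2)
        - 2 * (φ (L t)) ^ 4 * f i (x i) = 0 := by
      intro t
      have h := h3 i (L t)
      rw [hsum (L t) j, hBsum t, hA t, hLk t i hij] at h
      have hu : φ (L t) ≠ 0 := (hpos (L t)).ne'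
      field_simp at h
      have hmul : φ (L t) * (2 * A * φ (L t) - (B + (pd φ j (L t)) ^ 2)
          - 2 * (φ (L t)) ^ 4 * f i (x i)) = 0 := by linear_combination φ (L t) * h
      exact (mul_eq_zero.mp hmul).resolve_left hu
    -- differentiate the identity at t = 0
    have h1 := hΦ 0
    have h2 := hP 0
    have t1 : HasDerivAt (fun t => 2 * A * φ (L t)) (2 * A * pd φ j (L 0)) 0 := h1.const_mul _
    have t2 : HasDerivAt (fun t => B + (pd φ j (L t)) ^ 2)
        ((2 : ℕ) * pd φ j (L 0) ^ (2 - 1) * pd (pd φ j) j (L 0)) 0 := (h2.pow 2).const_add B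
    have t3 : HasDerivAt (fun t => 2 * (φ (L t)) ^ 4 * f i (x i))
        (2 * ((4 : ℕ) * φ (L 0) ^ (4 - 1) * pd φ j (L 0)) * f i (x i)) 0 :=
      ((h1.pow 4).const_mul 2).mul_const _
    have hG := (t1.sub t2).sub t3
    have hGzero : HasDerivAt (fun t => 2 * A * φ (L t) - (B + (pd φ j (L t)) ^ 2)
        - 2 * (φ (L t)) ^ 4 * f i (x i)) 0 0 := by
      have : (fun t => 2 * A * φ (L t) - (B + (pd φ j (L t)) ^ 2)
          - 2 * (φ (L t)) ^ 4 * f i (x i)) = fun _ => (0 : ℝ) := funext eqi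
      rw [this]
      exact hasDerivAt_const 0 0
    have hder := hG.unique hGzero
    rw [hL0] at hder
    push_cast at hder
    -- factor out pd φ j x
    have hfac : pd φ j x * (2 * A - 2 * pd (pd φ j) j x - 8 * (φ x) ^ 3 * f i (x i)) = 0 := by
      linear_combination hder
    have hinner : 2 * A - 2 * pd (pd φ j) j x - 8 * (φ x) ^ 3 * f i (x i) = 0 :=
      (mul_eq_zero.mp hfac).resolve_left hP0
    -- equations at the point x
    have eqi0 : 2 * A * φ x - (B + (pd φ j x) ^ 2) - 2 * (φ x) ^ 4 * f i (x i) = 0 := by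
      have := eqi 0
      rwa [hL0] at this
    have eqj0 : 2 * pd (pd φ j) j x * φ x - (B + (pd φ j x) ^ 2)
        - 2 * (φ x) ^ 4 * f j (x j) = 0 := by
      have h := h3 j x
      have hS : ∑ k, (pd φ k x) ^ 2 = (pd φ j x) ^ 2 + B := by rw [hsum x j, ← hBdef]
      rw [hS] at h
      have hu : φ x ≠ 0 := (hpos x).ne'
      field_simp at h
      have hmul : φ x * (2 * pd (pd φ j) j x * φ x - (B + (pd φ j x) ^ 2)
          - 2 * (φ x) ^ 4 * f j (x j)) = 0 := by linear_combination φ x * h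
      exact (mul_eq_zero.mp hmul).resolve_left hu
    have h5 : 2 * (φ x) ^ 4 * (3 * f i (x i) + f j (x j)) = 0 := by
      linear_combination eqi0 - eqj0 - φ x * hinner
    have h6 : 3 * f i (x i) + f j (x j) = 0 :=
      (mul_eq_zero.mp h5).resolve_left (by have := hpos x; positivity)
    exact hne i j hij (x i) (x j) h6
  -- Step 2: the equations force all f k to vanish
  have hf0 : ∀ (k : Fin n) (s : ℝ), f k s = 0 := by
    intro k s
    have h := h3 k (fun _ => s)
    have h2 : pd (pd φ k) k (fun _ => s) = 0 := by
      have : pd φ k = fun _ => (0 : ℝ) := funext (key k)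
      rw [this]
      simp [pd]
    rw [h2] at h
    have hu : φ (fun _ => s) ≠ 0 := (hpos _).ne'
    simp [key] at h
    tauto
  obtain ⟨i, j, hij⟩ : ∃ i j : Fin n, i ≠ j :=
    ⟨⟨0, by omega⟩, ⟨1, by omega⟩, by simp [Fin.ext_iff]⟩
  exact hne i j hij 0 0 (by simp [hf0])
end

section
/- Let h : ℝ → ℝ be smooth, C > 0 a constant, and set φ(t) = C·exp(−∫₀ᵗ h(s) ds). Define f(t) = −h(t)²/(2C²)·exp(2∫₀ᵗ h(s) ds) and f_k(t) = (h(t)² − 2h'(t))/(2C²)·exp(2∫₀ᵗ h(s) ds). Then the function Φ on ℝⁿ (n ≥ 3) given by Φ(x) = φ(xₖ) satisfies Φ_{,xₖxₖ}/Φ − |∇Φ|²/(2Φ²) = Φ² f_k(xₖ) and, for every i ≠ k, Φ_{,xᵢxᵢ}/Φ − |∇Φ|²/(2Φ²) = Φ² f(xₖ), together with Φ_{,xᵢxⱼ} = 0 for i ≠ j. -/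
theorem stmt14 (n : ℕ) (hn : 3 ≤ n) (k : Fin n)
    (h : ℝ → ℝ) (hh : ContDiff ℝ (⊤ : ℕ∞) h) (C : ℝ) (hC : 0 < C)
    (φ f fk : ℝ → ℝ)
    (hφ : ∀ t, φ t = C * Real.exp (-(∫ s in (0:ℝ)..t, h s)))
    (hfd : ∀ t, f t = -(h t) ^ 2 / (2 * C ^ 2) * Real.exp (2 * ∫ s in (0:ℝ)..t, h s))
    (hfk : ∀ t, fk t = ((h t) ^ 2 - 2 * deriv h t) / (2 * C ^ 2)
      * Real.exp (2 * ∫ s in (0:ℝ)..t, h s))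
    (Φ : (Fin n → ℝ) → ℝ) (hΦ : ∀ x, Φ x = φ (x k)) :
    (∀ x, pd (pd Φ k) k x / Φ x - (∑ l, (pd Φ l x) ^ 2) / (2 * Φ x ^ 2)
      = Φ x ^ 2 * fk (x k)) ∧
    (∀ i : Fin n, i ≠ k → ∀ x, pd (pd Φ i) i x / Φ x
      - (∑ l, (pd Φ l x) ^ 2) / (2 * Φ x ^ 2) = Φ x ^ 2 * f (x k)) ∧
    (∀ i j : Fin n, i ≠ j → ∀ x, pd (pd Φ j) i x = 0) := by
  have hcont : Continuous h := hh.continuous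
  set g : ℝ → ℝ := fun t => ∫ s in (0:ℝ)..t, h s with hg_def
  have hg : ∀ t, HasDerivAt g (h t) t := fun t =>
    (hcont.integral_hasStrictDerivAt 0 t).hasDerivAt
  have hφfun : φ = fun t => C * Real.exp (-(g t)) := funext hφ
  -- first derivative of φ
  have hφ' : ∀ t, HasDerivAt φ (-(h t) * φ t) t := by
    intro t
    rw [hφfun]
    have h2 : HasDerivAt (fun t => C * Real.exp (-(g t)))
        (C * (Real.exp (-(g t)) * -(h t))) t := ((hg t).neg.exp).const_mul C
    convert h2 using 1; ring
  have hh' : ∀ t, HasDerivAt h (deriv h t) t := fun t =>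
    ((hh.differentiable (by simp)) t).hasDerivAt
  set ψ : ℝ → ℝ := fun t => -(deriv h t) * φ t + -(h t) * (-(h t) * φ t) with hψ_def
  have hφ'' : ∀ t, HasDerivAt (fun t => -(h t) * φ t) (ψ t) t := fun t =>
    ((hh' t).neg.mul (hφ' t))
  -- Φ and its fderiv
  have hΦfun : Φ = fun x => φ (x k) := funext hΦ
  have hΦd : ∀ x : Fin n → ℝ, HasFDerivAt Φ
      ((-(h (x k)) * φ (x k)) • (ContinuousLinearMap.proj k : ((Fin n → ℝ)) →L[ℝ] ℝ)) x := by
    intro x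
    rw [hΦfun]
    exact (hφ' (x k)).comp_hasFDerivAt x (((ContinuousLinearMap.proj k : (Fin n → ℝ) →L[ℝ] ℝ).hasFDerivAt))
  have hpd : ∀ (l : Fin n) (x : Fin n → ℝ),
      pd Φ l x = -(h (x k)) * φ (x k) * (Pi.single l 1 : Fin n → ℝ) k := by
    intro l x
    rw [pd, (hΦd x).fderiv]
    simp
  have hpdk : pd Φ k = fun x => -(h (x k)) * φ (x k) := by
    funext x; rw [hpd]; simp
  have hpdne : ∀ l : Fin n, l ≠ k → pd Φ l = fun _ => (0:ℝ) := by
    intro l hl; funext x; rw [hpd, Pi.single_eq_of_ne (Ne.symm hl)]; ring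
  -- second derivative function
  have hA : ∀ x : Fin n → ℝ, HasFDerivAt (fun x : Fin n → ℝ => -(h (x k)) * φ (x k))
      ((ψ (x k)) • (ContinuousLinearMap.proj k : ((Fin n → ℝ)) →L[ℝ] ℝ)) x := fun x => by
    have := (hφ'' (x k)).comp_hasFDerivAt x (((ContinuousLinearMap.proj k : (Fin n → ℝ) →L[ℝ] ℝ).hasFDerivAt)); exact this
  have hpd2 : ∀ (l : Fin n) (x : Fin n → ℝ),
      pd (pd Φ k) l x = ψ (x k) * (Pi.single l 1 : Fin n → ℝ) k := by
    intro l x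
    rw [hpdk, pd, (hA x).fderiv]
    simp
  have hpdzero : ∀ (l : Fin n) (x : Fin n → ℝ), pd (fun _ : Fin n → ℝ => (0:ℝ)) l x = 0 := by
    intro l x; simp [pd]
  -- sum of squares
  have hsum : ∀ x : Fin n → ℝ, (∑ l, (pd Φ l x) ^ 2) = (-(h (x k)) * φ (x k)) ^ 2 := by
    intro x
    rw [Finset.sum_eq_single k]
    · rw [hpd]; simp
    · intro l _ hl; rw [hpd, Pi.single_eq_of_ne (Ne.symm hl)]; ring
    · simp
  have hφpos : ∀ t, 0 < φ t := by
    intro t; rw [hφ]; positivity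
  have hE : ∀ t, Real.exp (2 * ∫ s in (0:ℝ)..t, h s)
      = (Real.exp (∫ s in (0:ℝ)..t, h s))^2 := by
    intro t; rw [two_mul, Real.exp_add, sq]
  have hEn : ∀ t, Real.exp (-∫ s in (0:ℝ)..t, h s)
      = (Real.exp (∫ s in (0:ℝ)..t, h s))⁻¹ := fun t => Real.exp_neg _
  refine ⟨?_, ?_, ?_⟩
  · intro x
    rw [hpd2, Pi.single_eq_same, mul_one, hsum, hΦ, hfk]
    have hExp := Real.exp_pos (∫ s in (0:ℝ)..x k, h s)
    have hC' : C ≠ 0 := ne_of_gt hC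
    simp only [hψ_def, hφ, hE, hEn]
    field_simp
    ring
  · intro i hi x
    rw [hpdne i hi, hpdzero, hsum, hΦ, hfd]
    have hExp := Real.exp_pos (∫ s in (0:ℝ)..x k, h s)
    have hC' : C ≠ 0 := ne_of_gt hC
    simp only [hφ, hE, hEn]
    field_simp
    ring
  · intro i j hij x
    by_cases hjk : j = k
    · subst hjk
      rw [hpd2, Pi.single_eq_of_ne (Ne.symm hij), mul_zero]
    · rw [hpdne j hjk, hpdzero]
end

section
/- Define φ(t) = e^{−t²} and on ℝⁿ₊ = {x ∈ ℝⁿ : xₙ > 0}, n ≥ 3, the functions F(x) = xₙ (so the hyperbolic metric is g = F⁻² g₀) and Φ(x) = φ(xₙ)·xₙ⁻¹·xₙ = e^{−xₙ²}. Setting ψ(x) = Φ(x)·F(x) = xₙ e^{−xₙ²}, the function ψ is a smooth positive solution on ℝⁿ₊ of the Euclidean system ψ_{,xᵢxᵢ}/ψ − |∇ψ|²/(2ψ²) = ψ² fᵢ, ψ_{,xᵢxⱼ} = 0 (i ≠ j), where fᵢ(x) = −(2xₙ² − 1)²/(2xₙ⁴)·e^{2xₙ²} for i ≠ n and fₙ(x)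 = (4xₙ⁴ − 8xₙ² − 1)/(2xₙ⁴)·e^{2xₙ²}. -/
namespace Stmt19Aux

noncomputable def h (t : ℝ) : ℝ := t * Real.exp (-t ^ 2)
noncomputable def h1 (t : ℝ) : ℝ := (1 - 2 * t ^ 2) * Real.exp (-t ^ 2)
noncomputable def h2 (t : ℝ) : ℝ := (4 * t ^ 3 - 6 * t) * Real.exp (-t ^ 2)

lemma he (t : ℝ) : HasDerivAt (fun x : ℝ => Real.exp (-x ^ 2))
    (Real.exp (-t ^ 2) * -(2 * t)) t := by
  have := ((hasDerivAt_pow 2 t).neg).exp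
  simpa using this

lemma hd (t : ℝ) : HasDerivAt h (h1 t) t := by
  have := (hasDerivAt_id t).mul (he t)
  rw [show h = id * fun x => Real.exp (-x ^ 2) from rfl]
  refine this.congr_deriv ?_
  simp [h1]; ring

lemma hd1 (t : ℝ) : HasDerivAt h1 (h2 t) t := by
  have hp : HasDerivAt (fun x : ℝ => 1 - 2 * x ^ 2) (-(2 * (2 * t))) t := by
    have := ((hasDerivAt_pow 2 t).const_mul 2).const_sub 1
    simpa using this
  have := hp.mul (he t)
  rw [show h1 = (fun x : ℝ => 1 - 2 * x ^ 2) * fun x => Real.exp (-x ^ 2) from rfl]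
  refine this.congr_deriv ?_
  simp [h2]; ring

lemma pd_eq {n : ℕ} (ln i : Fin n) (u u' : ℝ → ℝ)
    (hu : ∀ t, HasDerivAt u (u' t) t) (x : Fin n → ℝ) :
    pd (fun y => u (y ln)) i x = u' (x ln) * (Pi.single i 1 : Fin n → ℝ) ln := by
  have hproj := (ContinuousLinearMap.proj (R := ℝ) (φ := fun _ : Fin n => ℝ) ln).hasFDerivAt (x := x)
  have hc := (hu (x ln)).comp_hasFDerivAt x hproj
  have heq : (fun y : Fin n → ℝ => u (y ln)) = u ∘ ⇑(ContinuousLinearMap.proj (R := ℝ) (φ := fun _ : Fin n => ℝ) ln) := rfl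
  rw [pd, heq, hc.fderiv]
  simp [mul_comm]

end Stmt19Aux

open Stmt19Aux in
theorem stmt19 (n : ℕ) (hn : 3 ≤ n) (ln : Fin n) (hln : (ln : ℕ) = n - 1)
    (ψ : (Fin n → ℝ) → ℝ)
    (hψ : ∀ x, ψ x = x ln * Real.exp (-(x ln) ^ 2))
    (f : Fin n → (Fin n → ℝ) → ℝ)
    (hfi : ∀ i : Fin n, i ≠ ln → ∀ x : Fin n → ℝ,
      f i x = -(2 * (x ln) ^ 2 - 1) ^ 2 / (2 * (x ln) ^ 4) * Real.exp (2 * (x ln) ^ 2))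
    (hfn : ∀ x : Fin n → ℝ,
      f ln x = (4 * (x ln) ^ 4 - 8 * (x ln) ^ 2 - 1) / (2 * (x ln) ^ 4)
        * Real.exp (2 * (x ln) ^ 2)) :
    ContDiff ℝ (⊤ : ℕ∞) ψ ∧ (∀ x : Fin n → ℝ, 0 < x ln → 0 < ψ x) ∧
    (∀ i : Fin n, ∀ x : Fin n → ℝ, 0 < x ln →
      pd (pd ψ i) i x / ψ x - (∑ l, (pd ψ l x) ^ 2) / (2 * ψ x ^ 2) = ψ x ^ 2 * f i x) ∧
    (∀ i j : Fin n, i ≠ j → ∀ x : Fin n → ℝ, 0 < x ln → pd (pd ψ j) i x = 0) := by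
  have hψf : ψ = fun y => h (y ln) := funext hψ
  -- single values
  set e : Fin n → ℝ := fun i => (Pi.single i (1:ℝ) : Fin n → ℝ) ln with he_def
  have he_self : e ln = 1 := by simp [he_def]
  have he_ne : ∀ i, i ≠ ln → e i = 0 := fun i hi => by
    simp [he_def, Pi.single_apply, hi.symm]
  -- first derivatives
  have hpd1 : ∀ i x, pd ψ i x = h1 (x ln) * e i := by
    intro i x; rw [hψf]; exact pd_eq ln i h h1 hd x
  -- second derivatives
  have hpd2 : ∀ i j x, pd (pd ψ j) i x = h2 (x ln) * e j * e i := by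
    intro i j x
    have : pd ψ j = fun y => (fun t => h1 t * e j) (y ln) := funext fun y => hpd1 j y
    rw [this, pd_eq ln i _ (fun t => h2 t * e j)
      (fun t => (hd1 t).mul_const (e j)) x]
  -- sum of squares of e
  have hsum : ∀ x : Fin n → ℝ, (∑ l, (pd ψ l x) ^ 2) = h1 (x ln) ^ 2 := by
    intro x
    have : ∀ l, (pd ψ l x) ^ 2 = h1 (x ln) ^ 2 * (e l) ^ 2 := by
      intro l; rw [hpd1]; ring
    simp only [this]
    rw [← Finset.mul_sum]
    have : (∑ l, (e l) ^ 2) = 1 := by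
      rw [Finset.sum_eq_single ln]
      · rw [he_self]; norm_num
      · intro b _ hb; rw [he_ne b hb]; norm_num
      · intro hb; exact absurd (Finset.mem_univ ln) hb
    rw [this, mul_one]
  refine ⟨?_, ?_, ?_, ?_⟩
  · rw [hψf]
    have hh : ContDiff ℝ (⊤ : ℕ∞) h :=
      contDiff_id.mul (Real.contDiff_exp.comp ((contDiff_id.pow 2).neg))
    exact hh.comp ((ContinuousLinearMap.proj (R := ℝ) (φ := fun _ : Fin n => ℝ) ln).contDiff)
  · intro x hx
    rw [hψ x]
    positivity
  · intro i x hx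
    set t := x ln with ht_def
    have ht : t ≠ 0 := ne_of_gt hx
    have hEne : Real.exp (-t ^ 2) ≠ 0 := Real.exp_ne_zero _
    have hX : Real.exp (2 * t ^ 2) = (Real.exp (-t ^ 2))⁻¹ ^ 2 := by
      rw [show (2 * t ^ 2) = -(-t ^ 2) + -(-t ^ 2) by ring, Real.exp_add, Real.exp_neg]; ring
    rw [hpd2, hsum, hψ x]
    rcases eq_or_ne i ln with rfl | hi
    · rw [hfn x, he_self, ← ht_def]
      simp only [h, h1, h2, hX, mul_one]
      field_simp
      ring
    · rw [hfi i hi x, he_ne i hi, ← ht_def]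
      simp only [h, h1, h2, hX, mul_zero, zero_mul, zero_div]
      field_simp
      ring
  · intro i j hij x _
    rw [hpd2]
    rcases eq_or_ne i ln with rfl | hi
    · rw [he_ne j (Ne.symm hij), mul_zero, zero_mul]
    · rw [he_ne i hi, mul_zero]
end
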